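/- Let D be a τ-atomic integral domain with τ symmetric and associate preserving. If G_τ(x) is connected for every x ∈ D^#, then D is a τ-UFD. (Consequently, connectedness of all G_τ(x) is equivalent to all G_τ(x) being pseudocliques.) -/

import Mathlib

/-- `a` is a nonzero nonunit, i.e. an element of `D^#`. -/
def NzNonunit {D : Type*} [CommRing D] (a : D) : Prop := a ≠ 0 ∧ ¬ IsUnit a

/-- `l` is the list of factors of a `τ`-factorization of `a`:
`a = λ * l.prod` for a unit `λ`, the factors are nonzero nonunits and pairwise `τ`-related. -/
def TauFact {D : Type*} [CommRing D] (τ : D → D → Prop) (l : List D) (a : D) : Prop :=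
  l ≠ [] ∧ (∀ b ∈ l, NzNonunit b) ∧ l.Pairwise τ ∧ ∃ u : Dˣ, a = (u : D) * l.prod

/-- `b` τ-divides `a`: `b` occurs as a factor in some τ-factorization of `a`. -/
def TauDvd {D : Type*} [CommRing D] (τ : D → D → Prop) (b a : D) : Prop :=
  ∃ l, TauFact τ l a ∧ b ∈ l

/-- `a` is τ-irreducible (a τ-atom): all its τ-factorizations are trivial. -/
def TauIrred {D : Type*} [CommRing D] (τ : D → D → Prop) (a : D) : Prop :=
  NzNonunit a ∧ ∀ l, TauFact τ l a → l.length = 1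

/-- `l` is a τ-atomic factorization of `a`. -/
def TauAtomicFact {D : Type*} [CommRing D] (τ : D → D → Prop) (l : List D) (a : D) : Prop :=
  TauFact τ l a ∧ ∀ b ∈ l, TauIrred τ b

/-- `D` is τ-atomic: every nonzero nonunit has a τ-atomic factorization. -/
def TauAtomic {D : Type*} [CommRing D] (τ : D → D → Prop) : Prop :=
  ∀ a : D, NzNonunit a → ∃ l, TauAtomicFact τ l a

def TauSymm {D : Type*} [CommRing D] (τ : D → D → Prop) : Prop :=
  ∀ a b, τ a b → τ b a

/-- τ is associate preserving. -/
def TauAssocPres {D : Type*} [CommRing D] (τ : D → D → Prop) : Prop :=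
  ∀ a b b' : D, τ a b → Associated b b' → τ a b'

/-- τ is refinable: replacing each factor of a τ-factorization by a
τ-factorization of it again yields a τ-factorization. -/
def TauRefinable {D : Type*} [CommRing D] (τ : D → D → Prop) : Prop :=
  ∀ (a : D) (l : List D) (F : List (List D)),
    TauFact τ l a → List.Forall₂ (fun b m => TauFact τ m b) l F →
    TauFact τ F.flatten a

/-- `a` is a vertex of the τ-irreducible divisor graph `G_τ(x)`. -/
def GVert {D : Type*} [CommRing D] (τ : D → D → Prop) (x a : D) : Prop :=
  TauIrred τ a ∧ TauDvd τ a x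

/-- `a` and `b` are adjacent (distinct, i.e. non-associated, vertices joined by an edge)
in `G_τ(x)`: some τ-factorization of `x` contains associates of both. -/
def GAdj {D : Type*} [CommRing D] (τ : D → D → Prop) (x a b : D) : Prop :=
  GVert τ x a ∧ GVert τ x b ∧ ¬ Associated a b ∧
  ∃ l, TauFact τ l x ∧ (∃ a' ∈ l, Associated a a') ∧ (∃ b' ∈ l, Associated b b')

/-- `G_τ(x)` is connected (vertices are taken up to associates). -/
def GConnected {D : Type*} [CommRing D] (τ : D → D → Prop) (x : D) : Prop :=
  ∀ a b, GVert τ x a → GVert τ x b →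
    Relation.ReflTransGen (fun u v => GAdj τ x u v ∨ Associated u v) a b

/-- The reduced graph `G̅_τ(x)` (loops deleted) is connected; loops do not affect
connectivity, so this is connectivity with respect to the same adjacency relation. -/
def GBarConnected {D : Type*} [CommRing D] (τ : D → D → Prop) (x : D) : Prop :=
  ∀ a b, GVert τ x a → GVert τ x b →
    Relation.ReflTransGen (fun u v => GAdj τ x u v ∨ Associated u v) a b

/-- `G_τ(x)` is a pseudoclique: any two non-associated vertices are adjacent.
(Equivalently, the reduced graph `G̅_τ(x)` is a clique / complete graph.) -/
def GPseudoclique {D : Type*} [CommRing D] (τ : D → D → Prop) (x : D) : Prop :=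
  ∀ a b, GVert τ x a → GVert τ x b → ¬ Associated a b → GAdj τ x a b

/-- `Diam(G_τ(x)) ≤ 1`: any two vertices are equal (associated) or adjacent. -/
def GDiamLeOne {D : Type*} [CommRing D] (τ : D → D → Prop) (x : D) : Prop :=
  ∀ a b, GVert τ x a → GVert τ x b → Associated a b ∨ GAdj τ x a b

/-- `G_τ(x)` has finitely many vertices (up to associates). -/
def GVertFinite {D : Type*} [CommRing D] (τ : D → D → Prop) (x : D) : Prop :=
  ∃ s : Finset D, ∀ a, GVert τ x a → ∃ c ∈ s, Associated a c

/-- The vertex `a` of `G_τ(x)` has finite degree: finitely many adjacent vertices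
up to associates (loops not counted). -/
def GDegFinite {D : Type*} [CommRing D] (τ : D → D → Prop) (x a : D) : Prop :=
  ∃ s : Finset D, ∀ b, GAdj τ x a b → ∃ c ∈ s, Associated b c

/-- The vertex `a` of `G_τ(x)` carries finitely many loops: there is a uniform bound on
the number of occurrences of associates of `a` in τ-atomic factorizations of `x`. -/
def GLoopsFinite {D : Type*} [CommRing D] (τ : D → D → Prop) (x a : D) : Prop :=
  ∃ N : ℕ, ∀ l m : List D, TauAtomicFact τ l x → m.Sublist l →
    (∀ b ∈ m, Associated a b) → m.length ≤ N

/-- `D` satisfies τ-ACCP. -/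
def TauACCP {D : Type*} [CommRing D] (τ : D → D → Prop) : Prop :=
  ∀ a : ℕ → D, (∀ i, TauDvd τ (a (i + 1)) (a i)) →
    ∃ N, ∀ i, N ≤ i → Associated (a i) (a N)

/-- `D` is a τ-UFD. -/
def TauUFD {D : Type*} [CommRing D] (τ : D → D → Prop) : Prop :=
  TauAtomic τ ∧ ∀ (x : D) (l₁ l₂ : List D), TauAtomicFact τ l₁ x → TauAtomicFact τ l₂ x →
    Multiset.Rel Associated (l₁ : Multiset D) (l₂ : Multiset D)

/-- `D` is a τ-FFD: each nonzero nonunit has only finitely many τ-factorizations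
up to rearrangement and associates. -/
def TauFFD {D : Type*} [CommRing D] (τ : D → D → Prop) : Prop :=
  ∀ x : D, NzNonunit x → ∃ S : Finset (Multiset D),
    ∀ l : List D, TauFact τ l x → ∃ m ∈ S, Multiset.Rel Associated (l : Multiset D) m

/-- `D` is a τ-WFFD: each nonzero nonunit has finitely many τ-divisors up to associates. -/
def TauWFFD {D : Type*} [CommRing D] (τ : D → D → Prop) : Prop :=
  ∀ x : D, NzNonunit x → ∃ s : Finset D,
    ∀ b, TauDvd τ b x → ∃ c ∈ s, Associated b c

/-- `D` is a τ-idf domain: each nonzero nonunit has finitely many τ-irreducible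
τ-divisors up to associates. -/
def TauIdf {D : Type*} [CommRing D] (τ : D → D → Prop) : Prop :=
  ∀ x : D, NzNonunit x → ∃ s : Finset D,
    ∀ b, TauIrred τ b → TauDvd τ b x → ∃ c ∈ s, Associated b c


/-!
Cancelling associated factors from two τ-factorizations of `y` leaves two τ-factorizations of a
proper factor of `y`. By induction on the length of a τ-atomic factorization `H` of `y`, every
vertex of `G_τ(y)` is associated to a factor of `H`: this holds for the factors of `H` and
passes along each edge `a — c`, since if `c ~ h ∈ H`, cancelling `c` and `h` makes `a` a vertex
of the graph of `(H.erase h).prod`; connectedness of `G_τ(y)` reaches every vertex. Uniqueness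
follows by cancelling matching atoms one at a time, and the same fact puts any two vertices
into one τ-atomic factorization, so `G_τ(x)` is a pseudoclique.
-/

section CommRing

variable {D : Type*} [CommRing D] {τ : D → D → Prop}

lemma NzNonunit.of_associated {a b : D} (ha : NzNonunit a) (hab : Associated a b) :
    NzNonunit b :=
  ⟨hab.ne_zero_iff.mp ha.1, hab.isUnit_iff.not.mp ha.2⟩

lemma TauFact.associated_prod {l : List D} {y : D} (hl : TauFact τ l y) :
    Associated l.prod y := by
  obtain ⟨-, -, -, u, rfl⟩ := hl
  exact ⟨u, mul_comm _ _⟩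

lemma TauFact.of_associated {l : List D} {y y' : D} (hl : TauFact τ l y)
    (hy : Associated y y') : TauFact τ l y' := by
  obtain ⟨u, hu⟩ := hl.associated_prod.trans hy
  obtain ⟨hne, hnn, hpw, -⟩ := hl
  exact ⟨hne, hnn, hpw, u, by rw [← hu, mul_comm]⟩

lemma TauFact.associated_of_singleton {a y : D} (h : TauFact τ [a] y) : Associated y a := by
  simpa using h.associated_prod.symm

lemma TauIrred.of_associated {a b : D} (ha : TauIrred τ a) (hab : Associated a b) :
    TauIrred τ b :=
  ⟨ha.1.of_associated hab, fun l hl => ha.2 l (hl.of_associated hab.symm)⟩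

lemma TauIrred.eq_singleton {l : List D} {v y : D} (hy : TauIrred τ y) (hl : TauFact τ l y)
    (hv : v ∈ l) : l = [v] := by
  obtain ⟨w, rfl⟩ := List.length_eq_one_iff.mp (hy.2 l hl)
  rw [List.mem_singleton.mp hv]

lemma TauFact.erase [DecidableEq D] {l : List D} {y c : D} (hl : TauFact τ l y)
    (hne : l.erase c ≠ []) : TauFact τ (l.erase c) (l.erase c).prod :=
  ⟨hne, fun b hb => hl.2.1 b (List.mem_of_mem_erase hb), hl.2.2.1.sublist List.erase_sublist,
    1, (one_mul _).symm⟩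

lemma TauAtomicFact.erase [DecidableEq D] {l : List D} {y c : D} (hl : TauAtomicFact τ l y)
    (hne : l.erase c ≠ []) : TauAtomicFact τ (l.erase c) (l.erase c).prod :=
  ⟨hl.1.erase hne, fun b hb => hl.2 b (List.mem_of_mem_erase hb)⟩

lemma TauAtomicFact.erase_ne_nil [DecidableEq D] {l : List D} {y c : D}
    (hl : TauAtomicFact τ l y) (hy : ¬ TauIrred τ y) (hc : c ∈ l) : l.erase c ≠ [] := by
  rintro he
  obtain rfl : l = [c] := (List.erase_eq_nil_iff.mp he).resolve_left (List.ne_nil_of_mem hc)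
  exact hy ((hl.2 c hc).of_associated hl.1.associated_of_singleton.symm)

lemma GPseudoclique.gConnected {x : D} (hx : GPseudoclique τ x) : GConnected τ x := by
  intro a b ha hb
  by_cases hab : Associated a b
  · exact .single (.inr hab)
  · exact .single (.inl (hx a b ha hb hab))

end CommRing

section IsDomain

variable {D : Type*} [CommRing D] [IsDomain D] {τ : D → D → Prop}

lemma nzNonunit_prod {l : List D} (hne : l ≠ []) (hl : ∀ b ∈ l, NzNonunit b) :
    NzNonunit l.prod := by
  obtain ⟨b, hb⟩ := List.exists_mem_of_ne_nil l hne
  exact ⟨fun h0 => (hl 0 (List.prod_eq_zero_iff.mp h0)).1 rfl,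
    fun hu => (hl b hb).2 (List.prod_isUnit_iff.mp hu b hb)⟩

lemma TauFact.nzNonunit {l : List D} {y : D} (hl : TauFact τ l y) : NzNonunit y :=
  (nzNonunit_prod hl.1 hl.2.1).of_associated hl.associated_prod

lemma TauFact.erase_of_associated [DecidableEq D] {l H : List D} {y c h : D}
    (hl : TauFact τ l y) (hH : TauFact τ H y) (hc : c ∈ l) (hh : h ∈ H)
    (hch : Associated c h) (hne : l.erase c ≠ []) :
    TauFact τ (l.erase c) (H.erase h).prod := by
  refine (hl.erase hne).of_associated (Associated.of_mul_left ?_ hch (hl.2.1 c hc).1)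
  rw [List.prod_erase hc, List.prod_erase hh]
  exact hl.associated_prod.trans hH.associated_prod.symm

lemma GAdj.exists_associated_mem [DecidableEq D] {H : List D} {y a c : D}
    (IH : ∀ H' : List D, H'.length < H.length → ∀ {y' v : D}, TauAtomicFact τ H' y' →
      GVert τ y' v → ∃ h ∈ H', Associated v h)
    (hH : TauAtomicFact τ H y) (hy : ¬ TauIrred τ y) (hac : GAdj τ y a c)
    (hc : ∃ h ∈ H, Associated c h) : ∃ h ∈ H, Associated a h := by
  obtain ⟨h, hh, hch⟩ := hc
  obtain ⟨ha, -, hnac, l, hl, ⟨a', ha'l, haa'⟩, ⟨c', hc'l, hcc'⟩⟩ := hac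
  have ha'c' : a' ≠ c' := by
    rintro rfl
    exact hnac (haa'.trans hcc'.symm)
  have ha'erase : a' ∈ l.erase c' := (List.mem_erase_of_ne ha'c').mpr ha'l
  have hl' : TauFact τ (l.erase c') (H.erase h).prod :=
    hl.erase_of_associated hH.1 hc'l hh (hcc'.symm.trans hch) (List.ne_nil_of_mem ha'erase)
  have hlt : (H.erase h).length < H.length :=
    Nat.lt_of_succ_le (List.length_erase_add_one hh).le
  obtain ⟨h', hh', ha'h'⟩ := IH _ hlt (hH.erase (hH.erase_ne_nil hy hh))
    ⟨ha.1.of_associated haa', _, hl', ha'erase⟩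
  exact ⟨h', List.mem_of_mem_erase hh', haa'.trans ha'h'⟩

theorem TauAtomicFact.exists_associated_mem_of_gVert
    (hconn : ∀ x : D, NzNonunit x → GConnected τ x) {H : List D} {y v : D}
    (hH : TauAtomicFact τ H y) (hv : GVert τ y v) : ∃ h ∈ H, Associated v h := by
  classical
  induction H using WellFounded.induction (measure List.length).wf generalizing y v with
  | _ H IH =>
    obtain ⟨h₀, hh₀⟩ := List.exists_mem_of_ne_nil H hH.1.1
    by_cases hy : TauIrred τ y
    · obtain ⟨l, hl, hvl⟩ := hv.2
      obtain rfl := hy.eq_singleton hH.1 hh₀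
      obtain rfl := hy.eq_singleton hl hvl
      exact ⟨h₀, List.mem_singleton_self _,
        hl.associated_of_singleton.symm.trans hH.1.associated_of_singleton⟩
    · have hpath := hconn y hH.1.nzNonunit v h₀ hv ⟨hH.2 h₀ hh₀, H, hH.1, hh₀⟩
      refine Relation.ReflTransGen.head_induction_on
        (motive := fun a _ => ∃ h ∈ H, Associated a h) hpath ⟨h₀, hh₀, .refl _⟩ ?_
      rintro a c (hac | hac) - ⟨h, hh, hch⟩
      · exact hac.exists_associated_mem IH hH hy ⟨h, hh, hch⟩
      · exact ⟨h, hh, hac.trans hch⟩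

theorem TauAtomicFact.rel_associated (hconn : ∀ x : D, NzNonunit x → GConnected τ x)
    {l₁ l₂ : List D} {x : D} (h₁ : TauAtomicFact τ l₁ x) (h₂ : TauAtomicFact τ l₂ x) :
    Multiset.Rel Associated (l₁ : Multiset D) (l₂ : Multiset D) := by
  classical
  induction l₁ using WellFounded.induction (measure List.length).wf generalizing l₂ x with
  | _ l₁ IH =>
    obtain ⟨b, hb⟩ := List.exists_mem_of_ne_nil l₂ h₂.1.1
    obtain ⟨a, ha, hba⟩ := h₁.exists_associated_mem_of_gVert hconn ⟨h₂.2 b hb, l₂, h₂.1, hb⟩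
    by_cases hx : TauIrred τ x
    · obtain rfl := hx.eq_singleton h₁.1 ha
      obtain rfl := hx.eq_singleton h₂.1 hb
      simpa using Multiset.Rel.cons
        (h₁.1.associated_of_singleton.symm.trans h₂.1.associated_of_singleton) Multiset.Rel.zero
    · have h₂' : TauAtomicFact τ (l₂.erase b) (l₁.erase a).prod :=
        ⟨h₂.1.erase_of_associated h₁.1 hb ha hba (h₂.erase_ne_nil hx hb),
          fun d hd => h₂.2 d (List.mem_of_mem_erase hd)⟩
      have hlt : (l₁.erase a).length < l₁.length :=
        Nat.lt_of_succ_le (List.length_erase_add_one ha).le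
      rw [← Multiset.cons_erase (Multiset.mem_coe.mpr ha),
        ← Multiset.cons_erase (Multiset.mem_coe.mpr hb), Multiset.coe_erase, Multiset.coe_erase]
      exact .cons hba.symm (IH _ hlt (h₁.erase (h₁.erase_ne_nil hx ha)) h₂')

theorem gPseudoclique_of_forall_gConnected (hconn : ∀ x : D, NzNonunit x → GConnected τ x)
    {H : List D} {x : D} (hH : TauAtomicFact τ H x) : GPseudoclique τ x := by
  intro a b ha hb hab
  obtain ⟨a', ha', haa'⟩ := hH.exists_associated_mem_of_gVert hconn ha
  obtain ⟨b', hb', hbb'⟩ := hH.exists_associated_mem_of_gVert hconn hb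
  exact ⟨ha, hb, hab, H, hH.1, ⟨a', ha', haa'⟩, ⟨b', hb', hbb'⟩⟩

end IsDomain

theorem stmt8_general {D : Type*} [CommRing D] [IsDomain D] (τ : D → D → Prop)
    (hatomic : TauAtomic τ) :
    ((∀ x : D, NzNonunit x → GConnected τ x) → TauUFD τ) ∧
    ((∀ x : D, NzNonunit x → GConnected τ x) ↔
      (∀ x : D, NzNonunit x → GPseudoclique τ x)) := by
  refine ⟨fun hconn => ⟨hatomic, fun x l₁ l₂ h₁ h₂ => h₁.rel_associated hconn h₂⟩,
    fun hconn x hx => ?_, fun hpc x hx => (hpc x hx).gConnected⟩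
  obtain ⟨H, hH⟩ := hatomic x hx
  exact gPseudoclique_of_forall_gConnected hconn hH

theorem stmt8 {D : Type*} [CommRing D] [IsDomain D] (τ : D → D → Prop)
    (hsym : TauSymm τ) (hap : TauAssocPres τ) (hatomic : TauAtomic τ) :
    ((∀ x : D, NzNonunit x → GConnected τ x) → TauUFD τ) ∧
    ((∀ x : D, NzNonunit x → GConnected τ x) ↔
      (∀ x : D, NzNonunit x → GPseudoclique τ x)) :=
  stmt8_general τ hatomic
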